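/- Let τ, ω ∈ ℍ, z ∈ ℂ, and m, ℓ ∈ ℤ. Then T̂(z + 2mτ + ℓ; τ, ω) = e^{−2πimz}·q^{−m²}·T̂(z; τ, ω), where q := e^{2πiτ}. -/

import Mathlib

open Complex

noncomputable section

/-- The false theta function `T(z;τ) = Σ_{n∈ℤ} sgn(n+1/2) e^{2πinz} q^{n²}`, `q = e^{2πiτ}`. -/
def TFn (z τ : ℂ) : ℂ :=
  ∑' n : ℤ, ((if (0:ℤ) ≤ n then (1:ℂ) else -1)) *
    Complex.exp (2 * Real.pi * I * n * z) * Complex.exp (2 * Real.pi * I * τ * (n : ℂ) ^ 2)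

/-- The false theta function `ψ(z;τ) = Σ_{n∈ℤ+1/2} sgn(n) e^{2πin(z+1/2)} q^{n²/2}`,
written with `n = k + 1/2`, `k ∈ ℤ`, and `q^{n²/2} = e^{πiτn²}`. -/
def psiFn (z τ : ℂ) : ℂ :=
  ∑' k : ℤ, ((if (0:ℤ) ≤ k then (1:ℂ) else -1)) *
    Complex.exp (2 * Real.pi * I * ((k : ℂ) + 1 / 2) * (z + 1 / 2)) *
      Complex.exp (Real.pi * I * τ * ((k : ℂ) + 1 / 2) ^ 2)

/-- The entire extension of `E(x) = 2∫₀ˣ e^{−πt²}dt` to `ℂ`, via its power series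
`E(z) = 2 Σ_{n≥0} (−π)^n z^{2n+1} / (n!(2n+1))`. -/
def Ecplx (z : ℂ) : ℂ :=
  2 * ∑' n : ℕ, (-(Real.pi : ℂ)) ^ n * z ^ (2 * n + 1) / (n.factorial * (2 * n + 1))

/-- The completed false theta function
`T̂(z;τ,ω) = Σ_{n∈ℤ} E(−i√(2πi(ω−τ))(n + Im z/(2 Im τ))) e^{2πinz} q^{n²}`,
with the principal branch of the square root. -/
def THat (z τ ω : ℂ) : ℂ :=
  ∑' n : ℤ, Ecplx (-I * (2 * Real.pi * I * (ω - τ)) ^ ((1 : ℂ) / 2) *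
      ((n : ℂ) + (z.im / (2 * τ.im) : ℝ))) *
    Complex.exp (2 * Real.pi * I * n * z) * Complex.exp (2 * Real.pi * I * τ * (n : ℂ) ^ 2)

/-- The completed false theta function
`ψ̂(z;τ,ω) = Σ_{n∈ℤ+1/2} E(−i√(πi(ω−τ))(n + Im z/Im τ)) e^{2πin(z+1/2)} q^{n²/2}`,
written with `n = k + 1/2`, `k ∈ ℤ`. -/
def psiHat (z τ ω : ℂ) : ℂ :=
  ∑' k : ℤ, Ecplx (-I * (Real.pi * I * (ω - τ)) ^ ((1 : ℂ) / 2) *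
      ((k : ℂ) + 1 / 2 + (z.im / τ.im : ℝ))) *
    Complex.exp (2 * Real.pi * I * ((k : ℂ) + 1 / 2) * (z + 1 / 2)) *
      Complex.exp (Real.pi * I * τ * ((k : ℂ) + 1 / 2) ^ 2)

/-! Reindex the series by `n ↦ n - m`. The shift `z ↦ z + 2mτ + ℓ` raises `Im z / (2 Im τ)` by `m`,
so the error-function argument of term `n - m` becomes that of term `n`, while the exponentials
acquire the common factor `e^{-2πimz} q^{-m²}`. Reindexing and pulling out a constant factor are
valid for `tsum` without any summability, so no convergence estimate is needed. -/

def tHatTerm (z τ ω : ℂ) (n : ℤ) : ℂ :=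
  Ecplx (-I * (2 * Real.pi * I * (ω - τ)) ^ ((1 : ℂ) / 2) *
      ((n : ℂ) + (z.im / (2 * τ.im) : ℝ))) *
    Complex.exp (2 * Real.pi * I * n * z) * Complex.exp (2 * Real.pi * I * τ * (n : ℂ) ^ 2)

lemma THat_eq_tsum_tHatTerm (z τ ω : ℂ) : THat z τ ω = ∑' n : ℤ, tHatTerm z τ ω n := rfl

lemma im_add_two_mul_int_mul_add_int_div {τ : ℂ} (hτ : τ.im ≠ 0) (z : ℂ) (m ℓ : ℤ) :
    (z + 2 * m * τ + ℓ).im / (2 * τ.im) = m + z.im / (2 * τ.im) := by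
  simp only [add_im, mul_im, mul_re, intCast_re, intCast_im, re_ofNat, im_ofNat]
  field_simp
  ring

lemma exp_mul_exp_sub_shift (z τ : ℂ) (n m ℓ : ℤ) :
    Complex.exp (2 * Real.pi * I * ((n - m : ℤ) : ℂ) * (z + 2 * m * τ + ℓ)) *
        Complex.exp (2 * Real.pi * I * τ * ((n - m : ℤ) : ℂ) ^ 2) =
      Complex.exp (-2 * Real.pi * I * m * z) * Complex.exp (2 * Real.pi * I * τ) ^ (-(m ^ 2)) *
        (Complex.exp (2 * Real.pi * I * n * z) * Complex.exp (2 * Real.pi * I * τ * (n : ℂ) ^ 2)) := by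
  rw [← Complex.exp_int_mul, ← Complex.exp_add, ← Complex.exp_add, ← Complex.exp_add,
    ← Complex.exp_add, Complex.exp_eq_exp_iff_exists_int]
  -- the cross term `2πi (n - m) ℓ` is the only discrepancy, and it lies in `2πiℤ`
  exact ⟨(n - m) * ℓ, by push_cast; ring⟩

lemma tHatTerm_shift {τ : ℂ} (hτ : τ.im ≠ 0) (z ω : ℂ) (n m ℓ : ℤ) :
    tHatTerm (z + 2 * m * τ + ℓ) τ ω (n - m) =
      Complex.exp (-2 * Real.pi * I * m * z) * Complex.exp (2 * Real.pi * I * τ) ^ (-(m ^ 2)) *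
        tHatTerm z τ ω n := by
  have hArg : ((n - m : ℤ) : ℂ) + (((z + 2 * m * τ + ℓ).im / (2 * τ.im) : ℝ) : ℂ) =
      (n : ℂ) + ((z.im / (2 * τ.im) : ℝ) : ℂ) := by
    rw [im_add_two_mul_int_mul_add_int_div hτ]
    push_cast
    ring
  rw [tHatTerm, tHatTerm, hArg, mul_assoc, exp_mul_exp_sub_shift]
  ring

theorem stmt15_general (τ ω z : ℂ) (hτ : 0 < τ.im) (m ℓ : ℤ) :
    THat (z + 2 * m * τ + ℓ) τ ω =
      Complex.exp (-2 * Real.pi * I * m * z) *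
        Complex.exp (2 * Real.pi * I * τ) ^ (-(m ^ 2)) * THat z τ ω := by
  rw [THat_eq_tsum_tHatTerm, THat_eq_tsum_tHatTerm, ← (Equiv.subRight m).tsum_eq,
    ← tsum_mul_left]
  exact tsum_congr fun n => tHatTerm_shift hτ.ne' z ω n m ℓ

theorem stmt15 (τ ω z : ℂ) (hτ : 0 < τ.im) (hω : 0 < ω.im) (m ℓ : ℤ) :
    THat (z + 2 * m * τ + ℓ) τ ω =
      Complex.exp (-2 * Real.pi * I * m * z) *
        Complex.exp (2 * Real.pi * I * τ) ^ (-(m ^ 2)) * THat z τ ω :=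
  stmt15_general τ ω z hτ m ℓ
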